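/- arXiv:2002.10045 — 2 statements merged into one kernel-verified Lean document; each statement's English description precedes it below -/
import Mathlib

section
/- Let a ∈ A and let η^s, η^{(1)}, η^{(2)} ∈ P_a with η^s = α·η^{(1)} + (1−α)·η^{(2)} for some α ∈ (0,1), and suppose (R(η^s) − R(η^{(1)}))·(C(η^s) − C(η^{(1)})) > 0. Then α·R(η^{(1)})·C(η^{(1)}) + (1−α)·R(η^{(2)})·C(η^{(2)}) > R(η^s)·C(η^s). Consequently, no feasible family attaining the supremum of the single-type problem can place positive weight on a posterior η^s ∈ P_a admitting such a decomposition. -/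
/-!
On `P_a` both `R` and `C = C_a` are affine, so for `η^s = α η¹ + (1 - α) η²`
`α R(η¹)C(η¹) + (1 - α) R(η²)C(η²) - R(η^s)C(η^s) = α (1 - α) (R(η¹) - R(η²)) (C(η¹) - C(η²))`,
and the slope condition is `(1 - α)²` times the last product, hence positive.
Splitting an atom `η^s` of weight `φ_s` of a feasible family into `η¹`, `η²` with weights
`α φ_s`, `(1 - α) φ_s` keeps the family feasible and raises its value by `φ_s` times that gap;
since `R·C` is bounded on the simplex the feasible values are bounded above, so at the
supremum that increase cannot be positive, i.e. `φ_s = 0`.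
-/

open Finset
open scoped Classical

noncomputable section

/-- The probability simplex in `ℝ^n`. -/
def simplex (n : ℕ) : Set (Fin n → ℝ) :=
  {η | (∀ ω, 0 ≤ η ω) ∧ ∑ ω, η ω = 1}

variable {n : ℕ} {A : Type*} [Fintype A] [Nonempty A]

/-- `u*(ω) = max_{a ∈ A} u(ω, a)`. -/
def uStar (u : Fin n → A → ℝ) (ω : Fin n) : ℝ :=
  Finset.univ.sup' Finset.univ_nonempty (u ω)

/-- `C_a(η) = Σ_ω η_ω (u*(ω) − u(ω,a))`, the expected regret of action `a`. -/
def Ca (u : Fin n → A → ℝ) (a : A) (η : Fin n → ℝ) : ℝ :=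
  ∑ ω, η ω * (uStar u ω - u ω a)

/-- The cost of uncertainty `C(η) = min_a C_a(η)`. -/
def Cost (u : Fin n → A → ℝ) (η : Fin n → ℝ) : ℝ :=
  Finset.univ.inf' Finset.univ_nonempty (fun a => Ca u a η)

/-- `P_a`: the polytope of beliefs under which `a` is a best action. -/
def Pa (u : Fin n → A → ℝ) (a : A) : Set (Fin n → ℝ) :=
  {η | η ∈ simplex n ∧ ∀ a' : A, Ca u a η ≤ Ca u a' η}

/-- The likelihood ratio `R(η) = Σ_ω μ_ω η_ω / θ_ω`. -/
def Ratio (μ θ η : Fin n → ℝ) : ℝ := ∑ ω, μ ω * η ω / θ ω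

/-- The set of feasible objective values of the single-type problem. -/
def ConcaveSet (u : Fin n → A → ℝ) (μ θ : Fin n → ℝ) : Set ℝ :=
  {v | ∃ (m : ℕ) (φ : Fin m → ℝ) (η : Fin m → Fin n → ℝ),
    (∀ s, 0 ≤ φ s) ∧ (∀ s, η s ∈ simplex n) ∧
    (∀ ω, ∑ s, φ s * η s ω = θ ω) ∧
    v = ∑ s, φ s * Ratio μ θ (η s) * Cost u (η s)}

lemma ratio_add_smul (μ θ η₁ η₂ : Fin n → ℝ) (b₁ b₂ : ℝ) :
    Ratio μ θ (fun ω => b₁ * η₁ ω + b₂ * η₂ ω) = b₁ * Ratio μ θ η₁ + b₂ * Ratio μ θ η₂ := by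
  simp only [Ratio, mul_sum, ← sum_add_distrib]
  exact sum_congr rfl fun ω _ => by ring

lemma ca_add_smul (u : Fin n → A → ℝ) (a : A) (η₁ η₂ : Fin n → ℝ) (b₁ b₂ : ℝ) :
    Ca u a (fun ω => b₁ * η₁ ω + b₂ * η₂ ω) = b₁ * Ca u a η₁ + b₂ * Ca u a η₂ := by
  simp only [Ca, mul_sum, ← sum_add_distrib]
  exact sum_congr rfl fun ω _ => by ring

lemma cost_eq_ca_of_mem_pa {u : Fin n → A → ℝ} {a : A} {η : Fin n → ℝ} (h : η ∈ Pa u a) :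
    Cost u η = Ca u a η :=
  le_antisymm (inf'_le _ (mem_univ a)) (le_inf' _ _ fun a' _ => h.2 a')

lemma mul_lt_add_mul_of_slope_pos {α x₁ x₂ y₁ y₂ : ℝ} (hα0 : 0 < α) (hα1 : α < 1)
    (hslope : (α * x₁ + (1 - α) * x₂ - x₁) * (α * y₁ + (1 - α) * y₂ - y₁) > 0) :
    (α * x₁ + (1 - α) * x₂) * (α * y₁ + (1 - α) * y₂) < α * (x₁ * y₁) + (1 - α) * (x₂ * y₂) := by
  have h1α : 0 < 1 - α := by linarith
  have hslope' : 0 < (1 - α) ^ 2 * ((x₂ - x₁) * (y₂ - y₁)) := by linarith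
  have hsame : 0 < (x₂ - x₁) * (y₂ - y₁) := pos_of_mul_pos_right hslope' (by positivity)
  calc (α * x₁ + (1 - α) * x₂) * (α * y₁ + (1 - α) * y₂)
      = α * (x₁ * y₁) + (1 - α) * (x₂ * y₂) - α * (1 - α) * ((x₂ - x₁) * (y₂ - y₁)) := by ring
    _ < α * (x₁ * y₁) + (1 - α) * (x₂ * y₂) := by
      have := mul_pos (mul_pos hα0 h1α) hsame
      linarith

lemma ratio_mul_cost_lt_of_mem_pa {u : Fin n → A → ℝ} {μ θ : Fin n → ℝ} {a : A}
    {η₁ η₂ : Fin n → ℝ} (hη₁ : η₁ ∈ Pa u a) (hη₂ : η₂ ∈ Pa u a) {α : ℝ} (hα0 : 0 < α)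
    (hα1 : α < 1) (hηs : (fun ω => α * η₁ ω + (1 - α) * η₂ ω) ∈ Pa u a)
    (hslope : (Ratio μ θ (fun ω => α * η₁ ω + (1 - α) * η₂ ω) - Ratio μ θ η₁) *
      (Cost u (fun ω => α * η₁ ω + (1 - α) * η₂ ω) - Cost u η₁) > 0) :
    Ratio μ θ (fun ω => α * η₁ ω + (1 - α) * η₂ ω) * Cost u (fun ω => α * η₁ ω + (1 - α) * η₂ ω) <
      α * (Ratio μ θ η₁ * Cost u η₁) + (1 - α) * (Ratio μ θ η₂ * Cost u η₂) := by
  simp only [cost_eq_ca_of_mem_pa hηs, cost_eq_ca_of_mem_pa hη₁, cost_eq_ca_of_mem_pa hη₂,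
    ca_add_smul, ratio_add_smul] at hslope ⊢
  exact mul_lt_add_mul_of_slope_pos hα0 hα1 hslope

lemma le_one_of_mem_simplex {η : Fin n → ℝ} (hη : η ∈ simplex n) (ω : Fin n) : η ω ≤ 1 :=
  (single_le_sum (fun i _ => hη.1 i) (mem_univ ω)).trans hη.2.le

lemma abs_ratio_le {μ θ η : Fin n → ℝ} (hθpos : ∀ ω, 0 < θ ω) (hη : η ∈ simplex n) :
    |Ratio μ θ η| ≤ ∑ ω, |μ ω| / θ ω := by
  refine (abs_sum_le_sum_abs _ _).trans (sum_le_sum fun ω _ => ?_)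
  rw [abs_div, abs_mul, abs_of_nonneg (hη.1 ω), abs_of_pos (hθpos ω)]
  exact div_le_div_of_nonneg_right
    (mul_le_of_le_one_right (abs_nonneg _) (le_one_of_mem_simplex hη ω)) (hθpos ω).le

lemma cost_nonneg (u : Fin n → A → ℝ) {η : Fin n → ℝ} (hη : η ∈ simplex n) : 0 ≤ Cost u η :=
  le_inf' _ _ fun a _ => sum_nonneg fun ω _ =>
    mul_nonneg (hη.1 ω) (sub_nonneg.2 (le_sup' (u ω) (mem_univ a)))

lemma cost_le (u : Fin n → A → ℝ) (a : A) {η : Fin n → ℝ} (hη : η ∈ simplex n) :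
    Cost u η ≤ ∑ ω, (uStar u ω - u ω a) :=
  (inf'_le _ (mem_univ a)).trans <| sum_le_sum fun ω _ =>
    mul_le_of_le_one_left (sub_nonneg.2 (le_sup' (u ω) (mem_univ a))) (le_one_of_mem_simplex hη ω)

lemma ratio_mul_cost_le {u : Fin n → A → ℝ} {μ θ η : Fin n → ℝ} (hθpos : ∀ ω, 0 < θ ω)
    (a : A) (hη : η ∈ simplex n) :
    Ratio μ θ η * Cost u η ≤ (∑ ω, |μ ω| / θ ω) * ∑ ω, (uStar u ω - u ω a) :=
  calc Ratio μ θ η * Cost u η ≤ |Ratio μ θ η| * Cost u η :=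
        mul_le_mul_of_nonneg_right (le_abs_self _) (cost_nonneg u hη)
    _ ≤ _ := mul_le_mul (abs_ratio_le hθpos hη) (cost_le u a hη) (cost_nonneg u hη)
        ((abs_nonneg _).trans (abs_ratio_le hθpos hη))

lemma sum_weights_eq {m : ℕ} {θ : Fin n → ℝ} {φ : Fin m → ℝ} {η : Fin m → Fin n → ℝ}
    (hη : ∀ s, η s ∈ simplex n) (hfeas : ∀ ω, ∑ s, φ s * η s ω = θ ω) :
    ∑ s, φ s = ∑ ω, θ ω := by
  simp only [← hfeas]
  rw [sum_comm]
  simp only [← mul_sum, (hη _).2, mul_one]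

lemma concaveSet_bddAbove (u : Fin n → A → ℝ) (μ : Fin n → ℝ) {θ : Fin n → ℝ}
    (hθpos : ∀ ω, 0 < θ ω) : BddAbove (ConcaveSet u μ θ) := by
  obtain ⟨a⟩ := ‹Nonempty A›
  set K := (∑ ω, |μ ω| / θ ω) * ∑ ω, (uStar u ω - u ω a)
  refine ⟨K * ∑ ω, θ ω, ?_⟩
  rintro v ⟨m, φ, η, hφ, hη, hfeas, rfl⟩
  calc ∑ s, φ s * Ratio μ θ (η s) * Cost u (η s) ≤ ∑ s, φ s * K :=
        sum_le_sum fun s _ => by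
          rw [mul_assoc]
          exact mul_le_mul_of_nonneg_left (ratio_mul_cost_le hθpos a (hη s)) (hφ s)
    _ = K * ∑ ω, θ ω := by rw [← sum_mul, sum_weights_eq hη hfeas, mul_comm]

def splitAt {X : Type*} {m : ℕ} (f : Fin m → X) (s : Fin m) (x₁ x₂ : X) : Fin (m + 1) → X :=
  Fin.snoc (Function.update f s x₁) x₂

lemma forall_splitAt {X : Type*} {m : ℕ} {P : X → Prop} {f : Fin m → X} (hf : ∀ i, P (f i))
    (s : Fin m) {x₁ x₂ : X} (h₁ : P x₁) (h₂ : P x₂) : ∀ i, P (splitAt f s x₁ x₂ i) := by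
  simp only [Fin.forall_iff_castSucc, splitAt, Fin.snoc_last, Fin.snoc_castSucc]
  rw [Function.forall_update_iff (p := fun _ => P)]
  exact ⟨h₂, h₁, fun i _ => hf i⟩

lemma sum_splitAt_mul {R X : Type*} [CommRing R] {m : ℕ} (φ : Fin m → R) (η : Fin m → X)
    (s : Fin m) (b₁ b₂ : R) (x₁ x₂ : X) (G : X → R) :
    ∑ i, splitAt φ s b₁ b₂ i * G (splitAt η s x₁ x₂ i) =
      ∑ i, φ i * G (η i) - φ s * G (η s) + b₁ * G x₁ + b₂ * G x₂ := by
  simp only [splitAt, Fin.sum_univ_castSucc, Fin.snoc_castSucc, Fin.snoc_last,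
    Function.apply_update₂ (fun _ b x => b * G x), sum_update_of_mem (mem_univ s)]
  rw [sum_eq_add_sum_sdiff_singleton_of_mem (mem_univ s) (fun i => φ i * G (η i))]
  ring

lemma splitAt_mem_concaveSet {u : Fin n → A → ℝ} {μ θ : Fin n → ℝ} {m : ℕ} {φ : Fin m → ℝ}
    {η : Fin m → Fin n → ℝ} (hφ : ∀ s, 0 ≤ φ s) (hη : ∀ s, η s ∈ simplex n)
    (hfeas : ∀ ω, ∑ s, φ s * η s ω = θ ω) (s : Fin m) {α : ℝ} (hα0 : 0 ≤ α) (hα1 : α ≤ 1)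
    {η₁ η₂ : Fin n → ℝ} (hη₁ : η₁ ∈ simplex n) (hη₂ : η₂ ∈ simplex n)
    (hdec : η s = fun ω => α * η₁ ω + (1 - α) * η₂ ω) :
    ∑ i, φ i * Ratio μ θ (η i) * Cost u (η i) - φ s * (Ratio μ θ (η s) * Cost u (η s)) +
      φ s * (α * (Ratio μ θ η₁ * Cost u η₁) + (1 - α) * (Ratio μ θ η₂ * Cost u η₂)) ∈
      ConcaveSet u μ θ := by
  refine ⟨m + 1, splitAt φ s (α * φ s) ((1 - α) * φ s), splitAt η s η₁ η₂,
    forall_splitAt hφ s (mul_nonneg hα0 (hφ s)) (mul_nonneg (sub_nonneg.2 hα1) (hφ s)),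
    forall_splitAt hη s hη₁ hη₂, fun ω => ?_, ?_⟩
  · rw [sum_splitAt_mul φ η s _ _ η₁ η₂ (· ω), hfeas, hdec]
    ring
  · simp only [mul_assoc]
    rw [sum_splitAt_mul φ η s _ _ η₁ η₂ fun v => Ratio μ θ v * Cost u v]
    ring

lemma weight_eq_zero_of_lt_split {u : Fin n → A → ℝ} {μ θ : Fin n → ℝ} (hθpos : ∀ ω, 0 < θ ω)
    {m : ℕ} {φ : Fin m → ℝ} {η : Fin m → Fin n → ℝ} (hφ : ∀ s, 0 ≤ φ s)
    (hη : ∀ s, η s ∈ simplex n) (hfeas : ∀ ω, ∑ s, φ s * η s ω = θ ω)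
    (hopt : ∑ s, φ s * Ratio μ θ (η s) * Cost u (η s) = sSup (ConcaveSet u μ θ))
    (s : Fin m) {α : ℝ} (hα0 : 0 ≤ α) (hα1 : α ≤ 1)
    {η₁ η₂ : Fin n → ℝ} (hη₁ : η₁ ∈ simplex n) (hη₂ : η₂ ∈ simplex n)
    (hdec : η s = fun ω => α * η₁ ω + (1 - α) * η₂ ω)
    (hgain : Ratio μ θ (η s) * Cost u (η s) <
      α * (Ratio μ θ η₁ * Cost u η₁) + (1 - α) * (Ratio μ θ η₂ * Cost u η₂)) :
    φ s = 0 := by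
  have hle := le_csSup (concaveSet_bddAbove u μ hθpos)
    (splitAt_mem_concaveSet hφ hη hfeas s hα0 hα1 hη₁ hη₂ hdec)
  rw [← hopt, ← sub_nonpos] at hle
  refine le_antisymm (nonpos_of_mul_nonpos_left ?_ (sub_pos.2 hgain)) (hφ s)
  linarith

theorem stmt4_general (u : Fin n → A → ℝ)
    (μ θ : Fin n → ℝ)
    (hθpos : ∀ ω, 0 < θ ω)
    (a : A) (ηs η₁ η₂ : Fin n → ℝ)
    (hηs : ηs ∈ Pa u a) (hη₁ : η₁ ∈ Pa u a) (hη₂ : η₂ ∈ Pa u a)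
    (α : ℝ) (hα0 : 0 < α) (hα1 : α < 1)
    (hdec : ηs = fun ω => α * η₁ ω + (1 - α) * η₂ ω)
    (hslope : (Ratio μ θ ηs - Ratio μ θ η₁) * (Cost u ηs - Cost u η₁) > 0) :
    Ratio μ θ ηs * Cost u ηs <
      α * (Ratio μ θ η₁ * Cost u η₁) + (1 - α) * (Ratio μ θ η₂ * Cost u η₂) ∧
    (∀ (m : ℕ) (φ : Fin m → ℝ) (η : Fin m → Fin n → ℝ),
      (∀ s, 0 ≤ φ s) → (∀ s, η s ∈ simplex n) →
      (∀ ω, ∑ s, φ s * η s ω = θ ω) →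
      (∑ s, φ s * Ratio μ θ (η s) * Cost u (η s)) = sSup (ConcaveSet u μ θ) →
      ∀ s, η s = ηs → φ s = 0) := by
  subst hdec
  have hgain := ratio_mul_cost_lt_of_mem_pa hη₁ hη₂ hα0 hα1 hηs hslope
  exact ⟨hgain, fun m φ η hφ hη hfeas hopt s hs =>
    weight_eq_zero_of_lt_split hθpos hφ hη hfeas hopt s hα0.le hα1.le hη₁.1 hη₂.1 hs
      (hs ▸ hgain)⟩

/-- if `η^s ∈ P_a` is decomposed within `P_a` along a direction with a
positive slope, then the decomposition strictly increases `R·C`; consequently no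
feasible family attaining the supremum of the single-type problem can place positive
weight on such a posterior. -/
theorem stmt4 (hn : 1 ≤ n) (u : Fin n → A → ℝ)
    (μ θ : Fin n → ℝ) (hμ : μ ∈ simplex n) (hθ : θ ∈ simplex n)
    (hθpos : ∀ ω, 0 < θ ω)
    (a : A) (ηs η₁ η₂ : Fin n → ℝ)
    (hηs : ηs ∈ Pa u a) (hη₁ : η₁ ∈ Pa u a) (hη₂ : η₂ ∈ Pa u a)
    (α : ℝ) (hα0 : 0 < α) (hα1 : α < 1)
    (hdec : ηs = fun ω => α * η₁ ω + (1 - α) * η₂ ω)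
    (hslope : (Ratio μ θ ηs - Ratio μ θ η₁) * (Cost u ηs - Cost u η₁) > 0) :
    Ratio μ θ ηs * Cost u ηs <
      α * (Ratio μ θ η₁ * Cost u η₁) + (1 - α) * (Ratio μ θ η₂ * Cost u η₂) ∧
    (∀ (m : ℕ) (φ : Fin m → ℝ) (η : Fin m → Fin n → ℝ),
      (∀ s, 0 ≤ φ s) → (∀ s, η s ∈ simplex n) →
      (∀ ω, ∑ s, φ s * η s ω = θ ω) →
      (∑ s, φ s * Ratio μ θ (η s) * Cost u (η s)) = sSup (ConcaveSet u μ θ) →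
      ∀ s, η s = ηs → φ s = 0) :=
  stmt4_general u μ θ hθpos a ηs η₁ η₂ hηs hη₁ hη₂ α hα0 hα1 hdec hslope

end
end

section
/- Let (S, (φ_s), (η^s)) be a feasible family attaining the supremum of the single-type problem, let s ∈ S have φ_s > 0 and η^s ∈ P_a, and write η^s = Σ_{i∈T} q_i·i where T is a set of extreme points of P_a and q_i > 0 for all i ∈ T with Σ_{i∈T} q_i = 1. Then the planar points {(R(i), C(i)) : i ∈ T} lie on a common line with nonpositive slope; that is, either R(i) = R(j) for all i, j ∈ T, or there exist real numbers k ≤ 0 and b with C(i) = k·R(i) + b for every i ∈ T. -/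
open Finset
open scoped Classical

noncomputable section

variable {n : ℕ} {A : Type*} [Fintype A] [Nonempty A]

/-!
If `η^s = ∑ q_i i` with all `q_i > 0` and `i ∈ P_a`, then for every `w` with `∑ w_i = 0` the
direction `v = ∑ w_i i` satisfies `η^s ± ε v ∈ P_a` for some `ε > 0`. Splitting the weight of
`η^s` equally between these two posteriors keeps the family feasible, and since `R` and
`C = C_a` are linear on `P_a` it changes the objective by `φ_s ε² R(v) C_a(v)`. Optimality
forces `R(v) C_a(v) ≤ 0`, so the differences `(R(i) - R(i₀), C(i) - C(i₀))` span a subspace of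
`ℝ²` on which `x y ≤ 0`: it is contained in the vertical axis or in a line of nonpositive slope.
-/

lemma dotProduct_le_sum_abs {η : Fin n → ℝ} (hη : η ∈ simplex n) (c : Fin n → ℝ) :
    c ⬝ᵥ η ≤ ∑ ω, |c ω| :=
  sum_le_sum fun ω _ => by
    have hle : η ω ≤ 1 := hη.2 ▸ single_le_sum (fun ω _ => hη.1 ω) (mem_univ ω)
    calc c ω * η ω ≤ |c ω| * η ω := mul_le_mul_of_nonneg_right (le_abs_self _) (hη.1 ω)
      _ ≤ |c ω| := mul_le_of_le_one_right (abs_nonneg _) hle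

lemma ratio_eq_dotProductBilin (μ θ : Fin n → ℝ) :
    Ratio μ θ = dotProductBilin ℝ ℝ (fun ω => μ ω / θ ω) := by
  ext η
  simp only [Ratio, dotProductBilin_apply_apply, dotProduct, mul_div_right_comm]

lemma ca_eq_dotProductBilin (u : Fin n → A → ℝ) (a : A) :
    Ca u a = dotProductBilin ℝ ℝ (fun ω => uStar u ω - u ω a) := by
  ext η
  simp only [Ca, dotProductBilin_apply_apply, dotProduct, mul_comm]

lemma ca_nonneg (u : Fin n → A → ℝ) (a : A) {η : Fin n → ℝ} (hη : η ∈ simplex n) :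
    0 ≤ Ca u a η :=
  sum_nonneg fun ω _ => mul_nonneg (hη.1 ω) (sub_nonneg.2 (le_sup' (u ω) (mem_univ a)))

lemma cost_le_ca (u : Fin n → A → ℝ) (a : A) (η : Fin n → ℝ) : Cost u η ≤ Ca u a η :=
  inf'_le _ (mem_univ a)

lemma cost_eq_ca {u : Fin n → A → ℝ} {a : A} {η : Fin n → ℝ} (hη : η ∈ Pa u a) :
    Cost u η = Ca u a η :=
  le_antisymm (cost_le_ca u a η) (le_inf' _ _ fun a' _ => hη.2 a')

lemma convex_pa (u : Fin n → A → ℝ) (a : A) : Convex ℝ (Pa u a) := by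
  intro x hx y hy α β hα hβ hαβ
  refine ⟨convex_stdSimplex ℝ (Fin n) hx.1 hy.1 hα hβ hαβ, fun a' => ?_⟩
  have hlin (b : A) : Ca u b (α • x + β • y) = α * Ca u b x + β * Ca u b y := by
    simp only [ca_eq_dotProductBilin, map_add, map_smul, smul_eq_mul]
  rw [hlin, hlin]
  exact add_le_add (mul_le_mul_of_nonneg_left (hx.2 a') hα)
    (mul_le_mul_of_nonneg_left (hy.2 a') hβ)

lemma bddAbove_concaveSet (u : Fin n → A → ℝ) (μ θ : Fin n → ℝ) :
    BddAbove (ConcaveSet u μ θ) := by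
  obtain ⟨a₀⟩ := ‹Nonempty A›
  set M := ∑ ω, |μ ω / θ ω|
  set B := ∑ ω, |uStar u ω - u ω a₀|
  refine ⟨(∑ ω, θ ω) * (M * B), ?_⟩
  rintro v ⟨m, φ, η, hφ, hη, hfeas, rfl⟩
  have hmass : ∑ s, φ s = ∑ ω, θ ω := by
    simp only [← hfeas, sum_comm (s := univ) (t := univ), ← mul_sum, (hη _).2, mul_one]
  have hterm (s : Fin m) : Ratio μ θ (η s) * Cost u (η s) ≤ M * B := by
    have hR : Ratio μ θ (η s) ≤ M := by
      rw [ratio_eq_dotProductBilin, dotProductBilin_apply_apply]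
      exact dotProduct_le_sum_abs (hη s) _
    have hC : Cost u (η s) ≤ B := by
      refine (cost_le_ca u a₀ _).trans ?_
      rw [ca_eq_dotProductBilin, dotProductBilin_apply_apply]
      exact dotProduct_le_sum_abs (hη s) _
    exact mul_le_mul hR hC (cost_nonneg u (hη s)) (sum_nonneg fun ω _ => abs_nonneg _)
  calc ∑ s, φ s * Ratio μ θ (η s) * Cost u (η s) ≤ ∑ s, φ s * (M * B) :=
        sum_le_sum fun s _ => by rw [mul_assoc]; exact mul_le_mul_of_nonneg_left (hterm s) (hφ s)
    _ = (∑ ω, θ ω) * (M * B) := by rw [← sum_mul, hmass]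

section Splitting

variable {m : ℕ} {β : Type*}

lemma forall_snoc_update {p : β → Prop} {f : Fin m → β} (hf : ∀ t, p (f t)) (s : Fin m)
    {b b' : β} (hb : p b) (hb' : p b') :
    ∀ t, p (Fin.snoc (α := fun _ => β) (Function.update f s b) b' t) := by
  refine Fin.forall_fin_succ'.2 ⟨fun t => ?_, by simpa using hb'⟩
  rcases eq_or_ne t s with rfl | h <;> simp [*]

lemma sum_snoc_update {γ : Type*} (F : β → γ → ℝ) (f : Fin m → β) (g : Fin m → γ) (s : Fin m)
    (b b' : β) (c c' : γ) :
    ∑ t, F (Fin.snoc (α := fun _ => β) (Function.update f s b) b' t)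
        (Fin.snoc (α := fun _ => γ) (Function.update g s c) c' t) =
      ∑ t, F (f t) (g t) - F (f s) (g s) + F b c + F b' c' := by
  have hupd : ∀ t, F (Function.update f s b t) (Function.update g s c t) =
      Function.update (fun t => F (f t) (g t)) s (F b c) t := fun t => by
    rcases eq_or_ne t s with rfl | h <;> simp [*]
  rw [Fin.sum_univ_castSucc]
  simp only [Fin.snoc_castSucc, Fin.snoc_last, hupd]
  rw [sum_update_of_mem (mem_univ s), ← add_sum_erase _ _ (mem_univ s), sdiff_singleton_eq_erase]
  ring

end Splitting

lemma split_mem_concaveSet {u : Fin n → A → ℝ} {μ θ : Fin n → ℝ} {m : ℕ} {φ : Fin m → ℝ}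
    {η : Fin m → Fin n → ℝ} (hφ : ∀ s, 0 ≤ φ s) (hη : ∀ s, η s ∈ simplex n)
    (hfeas : ∀ ω, ∑ s, φ s * η s ω = θ ω) (s : Fin m) {x y : Fin n → ℝ}
    (hx : x ∈ simplex n) (hy : y ∈ simplex n) (hxy : ∀ ω, x ω + y ω = 2 * η s ω) :
    ∑ t, φ t * Ratio μ θ (η t) * Cost u (η t) - φ s * Ratio μ θ (η s) * Cost u (η s)
      + φ s / 2 * Ratio μ θ x * Cost u x + φ s / 2 * Ratio μ θ y * Cost u y
      ∈ ConcaveSet u μ θ := by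
  have hφs := hφ s
  refine ⟨m + 1, Fin.snoc (Function.update φ s (φ s / 2)) (φ s / 2),
    Fin.snoc (Function.update η s x) y, forall_snoc_update hφ s (by positivity) (by positivity),
    forall_snoc_update hη s hx hy, fun ω => ?_, ?_⟩
  · rw [sum_snoc_update (fun (c : ℝ) (ζ : Fin n → ℝ) => c * ζ ω), ← hfeas ω]
    linear_combination (φ s / 2) * hxy ω
  · rw [sum_snoc_update (fun (c : ℝ) (ζ : Fin n → ℝ) => c * Ratio μ θ ζ * Cost u ζ)]

lemma ratio_mul_ca_nonpos_of_optimal {u : Fin n → A → ℝ} {μ θ : Fin n → ℝ} {m : ℕ} {φ : Fin m → ℝ}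
    {η : Fin m → Fin n → ℝ} (hφ : ∀ s, 0 ≤ φ s) (hη : ∀ s, η s ∈ simplex n)
    (hfeas : ∀ ω, ∑ s, φ s * η s ω = θ ω)
    (hopt : ∑ s, φ s * Ratio μ θ (η s) * Cost u (η s) = sSup (ConcaveSet u μ θ))
    {s : Fin m} (hφs : 0 < φ s) {a : A} (hηs : η s ∈ Pa u a) {v : Fin n → ℝ}
    (hadd : η s + v ∈ Pa u a) (hsub : η s - v ∈ Pa u a) :
    Ratio μ θ v * Ca u a v ≤ 0 := by
  have hmid (ω : Fin n) : (η s + v) ω + (η s - v) ω = 2 * η s ω := by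
    simp only [Pi.add_apply, Pi.sub_apply]; ring
  have hle := le_csSup (bddAbove_concaveSet u μ θ)
    (split_mem_concaveSet hφ hη hfeas s hadd.1 hsub.1 hmid)
  rw [← hopt, cost_eq_ca hadd, cost_eq_ca hsub, cost_eq_ca hηs] at hle
  have hR : Ratio μ θ (η s + v) = Ratio μ θ (η s) + Ratio μ θ v ∧
      Ratio μ θ (η s - v) = Ratio μ θ (η s) - Ratio μ θ v := by
    simp only [ratio_eq_dotProductBilin, map_add, map_sub, and_self]
  have hC : Ca u a (η s + v) = Ca u a (η s) + Ca u a v ∧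
      Ca u a (η s - v) = Ca u a (η s) - Ca u a v := by
    simp only [ca_eq_dotProductBilin, map_add, map_sub, and_self]
  rw [hR.1, hR.2, hC.1, hC.2] at hle
  have : φ s * (Ratio μ θ v * Ca u a v) ≤ 0 := by linarith
  exact nonpos_of_mul_nonpos_right this hφs

lemma Convex.exists_add_sub_smul_mem {E : Type*} [AddCommGroup E] [Module ℝ E] {P : Set E}
    (hP : Convex ℝ P) {T : Finset E} (hTP : ↑T ⊆ P) {q w : E → ℝ} (hq : ∀ i ∈ T, 0 < q i)
    (hqsum : ∑ i ∈ T, q i = 1) (hw : ∑ i ∈ T, w i = 0) :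
    ∃ ε : ℝ, 0 < ε ∧ ∑ i ∈ T, q i • i + ε • ∑ i ∈ T, w i • i ∈ P ∧
      ∑ i ∈ T, q i • i - ε • ∑ i ∈ T, w i • i ∈ P := by
  have hT : T.Nonempty := nonempty_of_sum_ne_zero (f := q) (by rw [hqsum]; exact one_ne_zero)
  set ε := T.inf' hT fun i => q i / (|w i| + 1)
  have hε : 0 < ε := (lt_inf'_iff hT).2 fun i hi => div_pos (hq i hi) (by positivity)
  have hmem (t : ℝ) (ht : |t| ≤ ε) : ∑ i ∈ T, q i • i + t • ∑ i ∈ T, w i • i ∈ P := by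
    have hcoef (i : E) (hi : i ∈ T) : |t * w i| ≤ q i := by
      have hεi : ε * (|w i| + 1) ≤ q i := (le_div_iff₀ (by positivity)).1 (inf'_le _ hi)
      rw [abs_mul]
      nlinarith [abs_nonneg t, abs_nonneg (w i)]
    have hsum : ∑ i ∈ T, q i • i + t • ∑ i ∈ T, w i • i = ∑ i ∈ T, (q i + t * w i) • i := by
      simp only [smul_sum, smul_smul, add_smul, sum_add_distrib]
    rw [hsum]
    refine hP.sum_mem (fun i hi => ?_) ?_ fun i hi => hTP hi
    · linarith [neg_abs_le (t * w i), hcoef i hi]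
    · rw [sum_add_distrib, ← mul_sum, hqsum, hw, mul_zero, add_zero]
  refine ⟨ε, hε, hmem ε (abs_of_pos hε).le, ?_⟩
  simpa only [sub_eq_add_neg, neg_smul] using hmem (-ε) (abs_neg ε ▸ (abs_of_pos hε).le)

lemma mul_eq_mul_of_forall_mul_nonpos {r₁ c₁ r₂ c₂ : ℝ}
    (h : ∀ α β : ℝ, (α * r₁ + β * r₂) * (α * c₁ + β * c₂) ≤ 0) : r₁ * c₂ = c₁ * r₂ := by
  by_contra hne
  have hd : r₁ * c₂ - c₁ * r₂ ≠ 0 := sub_ne_zero.2 hne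
  set d := r₁ * c₂ - c₁ * r₂
  -- By Cramer's rule these coefficients make both factors of `h` equal to `1`.
  have hr : (c₂ - r₂) / d * r₁ + (r₁ - c₁) / d * r₂ = 1 := by
    field_simp; ring
  have hc : (c₂ - r₂) / d * c₁ + (r₁ - c₁) / d * c₂ = 1 := by
    field_simp; ring
  have := h ((c₂ - r₂) / d) ((r₁ - c₁) / d)
  rw [hr, hc] at this
  norm_num at this

lemma sum_single_sub_single_mul {ι : Type*} [DecidableEq ι] {T : Finset ι} {i j : ι}
    (hi : i ∈ T) (hj : j ∈ T) (X : ι → ℝ) :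
    ∑ k ∈ T, (Pi.single i 1 - Pi.single j 1 : ι → ℝ) k * X k = X i - X j := by
  simp [sub_mul, sum_sub_distrib, Pi.single_apply, hi, hj]

lemma eq_or_exists_nonpos_slope_of_forall_sum_mul_nonpos {ι : Type*} [DecidableEq ι]
    {T : Finset ι} {R C : ι → ℝ}
    (h : ∀ w : ι → ℝ, ∑ i ∈ T, w i = 0 → (∑ i ∈ T, w i * R i) * (∑ i ∈ T, w i * C i) ≤ 0) :
    (∀ i ∈ T, ∀ j ∈ T, R i = R j) ∨ ∃ k b : ℝ, k ≤ 0 ∧ ∀ i ∈ T, C i = k * R i + b := by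
  by_cases hR : ∀ i ∈ T, ∀ j ∈ T, R i = R j
  · exact Or.inl hR
  push Not at hR
  obtain ⟨i₀, hi₀, i₁, hi₁, hne⟩ := hR
  have hquad (j) (hj : j ∈ T) (α β : ℝ) :
      (α * (R i₁ - R i₀) + β * (R j - R i₀)) *
        (α * (C i₁ - C i₀) + β * (C j - C i₀)) ≤ 0 := by
    set w : ι → ℝ :=
      α • (Pi.single i₁ 1 - Pi.single i₀ 1) + β • (Pi.single j 1 - Pi.single i₀ 1)
    have hw (X : ι → ℝ) :
        ∑ k ∈ T, w k * X k = α * (X i₁ - X i₀) + β * (X j - X i₀) := by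
      simp only [w, Pi.add_apply, Pi.smul_apply, smul_eq_mul, add_mul, mul_assoc,
        sum_add_distrib, ← mul_sum, sum_single_sub_single_mul hi₁ hi₀,
        sum_single_sub_single_mul hj hi₀]
    have := h w (by simpa using hw 1)
    rwa [hw, hw] at this
  have hr₁ : R i₁ - R i₀ ≠ 0 := sub_ne_zero.2 hne.symm
  obtain ⟨k, hk⟩ : ∃ k, C i₁ - C i₀ = k * (R i₁ - R i₀) :=
    ⟨_, (div_mul_cancel₀ _ hr₁).symm⟩
  have hk_nonpos : k ≤ 0 := by
    have h₁ := hquad i₁ hi₁ 1 0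
    simp only [one_mul, zero_mul, add_zero, hk] at h₁
    exact nonpos_of_mul_nonpos_left (by linarith) (by positivity : 0 < (R i₁ - R i₀) ^ 2)
  refine Or.inr ⟨k, C i₀ - k * R i₀, hk_nonpos, fun j hj => ?_⟩
  have hline := mul_eq_mul_of_forall_mul_nonpos (hquad j hj)
  rw [hk] at hline
  exact mul_left_cancel₀ hr₁ (by linear_combination hline)

theorem stmt7_general (u : Fin n → A → ℝ)
    (μ θ : Fin n → ℝ)
    (m : ℕ) (φ : Fin m → ℝ) (η : Fin m → Fin n → ℝ)
    (hφ : ∀ s, 0 ≤ φ s) (hη : ∀ s, η s ∈ simplex n)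
    (hfeas : ∀ ω, ∑ s, φ s * η s ω = θ ω)
    (hopt : (∑ s, φ s * Ratio μ θ (η s) * Cost u (η s)) = sSup (ConcaveSet u μ θ))
    (s : Fin m) (hφs : 0 < φ s) (a : A) (hηs : η s ∈ Pa u a)
    (T : Finset (Fin n → ℝ)) (hT : ↑T ⊆ Set.extremePoints ℝ (Pa u a))
    (q : (Fin n → ℝ) → ℝ) (hq : ∀ i ∈ T, 0 < q i) (hqsum : ∑ i ∈ T, q i = 1)
    (hcomb : ∀ ω, ∑ i ∈ T, q i * i ω = η s ω) :
    (∀ i ∈ T, ∀ j ∈ T, Ratio μ θ i = Ratio μ θ j) ∨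
    (∃ k b : ℝ, k ≤ 0 ∧ ∀ i ∈ T, Cost u i = k * Ratio μ θ i + b) := by
  have hTP : ↑T ⊆ Pa u a := fun i hi => (hT hi).1
  have hηs_eq : ∑ i ∈ T, q i • i = η s := funext fun ω => by simpa [Finset.sum_apply] using hcomb ω
  have key (w : (Fin n → ℝ) → ℝ) (hw : ∑ i ∈ T, w i = 0) :
      (∑ i ∈ T, w i * Ratio μ θ i) * (∑ i ∈ T, w i * Ca u a i) ≤ 0 := by
    obtain ⟨ε, hε, hadd, hsub⟩ := (convex_pa u a).exists_add_sub_smul_mem hTP hq hqsum hw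
    rw [hηs_eq] at hadd hsub
    have h := ratio_mul_ca_nonpos_of_optimal hφ hη hfeas hopt hφs hηs hadd hsub
    have hR : Ratio μ θ (ε • ∑ i ∈ T, w i • i) = ε * ∑ i ∈ T, w i * Ratio μ θ i := by
      simp only [ratio_eq_dotProductBilin, map_smul, map_sum, smul_eq_mul]
    have hC : Ca u a (ε • ∑ i ∈ T, w i • i) = ε * ∑ i ∈ T, w i * Ca u a i := by
      simp only [ca_eq_dotProductBilin, map_smul, map_sum, smul_eq_mul]
    rw [hR, hC] at h
    exact nonpos_of_mul_nonpos_right (by linarith) (mul_pos hε hε)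
  obtain hR | ⟨k, b, hk, hline⟩ := eq_or_exists_nonpos_slope_of_forall_sum_mul_nonpos key
  · exact Or.inl hR
  · exact Or.inr ⟨k, b, hk, fun i hi => by rw [cost_eq_ca (hTP hi)]; exact hline i hi⟩

/-- in a feasible family attaining the supremum of the single-type
problem, if a positively weighted posterior `η^s ∈ P_a` is a convex combination with
strictly positive coefficients of a set `T` of extreme points of `P_a`, then the
planar points `{(R(i), C(i)) : i ∈ T}` lie on a common line with nonpositive slope. -/
theorem stmt7 (hn : 1 ≤ n) (u : Fin n → A → ℝ)
    (μ θ : Fin n → ℝ) (hμ : μ ∈ simplex n) (hθ : θ ∈ simplex n)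
    (hθpos : ∀ ω, 0 < θ ω)
    (m : ℕ) (φ : Fin m → ℝ) (η : Fin m → Fin n → ℝ)
    (hφ : ∀ s, 0 ≤ φ s) (hη : ∀ s, η s ∈ simplex n)
    (hfeas : ∀ ω, ∑ s, φ s * η s ω = θ ω)
    (hopt : (∑ s, φ s * Ratio μ θ (η s) * Cost u (η s)) = sSup (ConcaveSet u μ θ))
    (s : Fin m) (hφs : 0 < φ s) (a : A) (hηs : η s ∈ Pa u a)
    (T : Finset (Fin n → ℝ)) (hT : ↑T ⊆ Set.extremePoints ℝ (Pa u a))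
    (q : (Fin n → ℝ) → ℝ) (hq : ∀ i ∈ T, 0 < q i) (hqsum : ∑ i ∈ T, q i = 1)
    (hcomb : ∀ ω, ∑ i ∈ T, q i * i ω = η s ω) :
    (∀ i ∈ T, ∀ j ∈ T, Ratio μ θ i = Ratio μ θ j) ∨
    (∃ k b : ℝ, k ≤ 0 ∧ ∀ i ∈ T, Cost u i = k * Ratio μ θ i + b) :=
  stmt7_general u μ θ m φ η hφ hη hfeas hopt s hφs a hηs T hT q hq hqsum hcomb
end
end
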